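/- arXiv:2011.01796 — 2 statements merged into one kernel-verified Lean document; each statement's English description precedes it below -/
import Mathlib

section
/- (Ryu splitting, weak convergence.) Let A, B, C be maximally monotone set-valued operators on H such that there exists u₀ ∈ H with 0 ∈ (A+B+C)(u₀), let γ > 0 and let λ ∈ (0,1). Let (x_k), (y_k), (u_k), (v_k), (w_k) be sequences in H such that for all k: x_k − u_k ∈ γ•A(u_k); (u_k + y_k) − v_k ∈ γ•B(v_k); (u_k − x_k + v_k − y_k) − w_k ∈ γ•C(w_k); x_{k+1} = x_k + λ(w_k − u_k); and y_{k+1} = y_k + λ(w_k − v_k). Then there exist x, y, u ∈ H such that x_k ⇀ x, y_k ⇀ y, u_k ⇀ u, v_k ⇀ u and w_k ⇀ u weakly, with x − u ∈ γ•A(u), y ∈ γ•B(u) and u − x − y ∈ γ•C(u); in particular 0 ∈ (A+B+C)(u). -/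
/-!
Put `z_k = (x_k, y_k)` and `r_k = (u_k - w_k, v_k - w_k)` in the Hilbert space `H × H` with the
`ℓ²` norm, so that `z_{k+1} = z_k - λ r_k`. Adding the three monotonicity inequalities of the
resolvent steps against a fixed point `(x̄, ȳ, ū)` gives `‖r_k‖² ≤ 2⟪z_k - z̄, r_k⟫`, hence
`‖z_{k+1} - z̄‖² ≤ ‖z_k - z̄‖² - λ(1 - λ)‖r_k‖²`: the iterates are Fejér monotone and `r_k → 0`.
Along an ultrafilter the bounded iterates have weak limits, and since the residuals vanish strongly
the summed monotonicity gap is weakly continuous in the limit, so joint maximality of `A, B, C`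
makes every weak cluster point a fixed point. Opial's argument then yields weak convergence of
`z_k`, and `u_k` converges because `ū` is determined by `x̄` through the resolvent of `A`.
-/

open scoped RealInnerProductSpace Pointwise
open Filter Topology

/-- `A` is monotone. -/
def IsMonotoneOp {H : Type*} [NormedAddCommGroup H] [InnerProductSpace ℝ H]
    (A : H → Set H) : Prop :=
  ∀ x y u v : H, u ∈ A x → v ∈ A y → 0 ≤ ⟪x - y, u - v⟫

/-- `A` is maximally monotone. -/
def IsMaxMonotoneOp {H : Type*} [NormedAddCommGroup H] [InnerProductSpace ℝ H]
    (A : H → Set H) : Prop :=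
  IsMonotoneOp A ∧
    ∀ x u : H, (∀ y v : H, v ∈ A y → 0 ≤ ⟪x - y, u - v⟫) → u ∈ A x

section MonotoneOperator

variable {H : Type*} [NormedAddCommGroup H] [InnerProductSpace ℝ H]

theorem IsMaxMonotoneOp.smul {A : H → Set H} (hA : IsMaxMonotoneOp A) {γ : ℝ} (hγ : 0 < γ) :
    IsMaxMonotoneOp fun t => γ • A t := by
  refine ⟨?_, fun x u h => ⟨γ⁻¹ • u, hA.2 x _ fun y v hv => ?_, smul_inv_smul₀ hγ.ne' u⟩⟩
  · rintro x y _ _ ⟨a, ha, rfl⟩ ⟨b, hb, rfl⟩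
    rw [← smul_sub, real_inner_smul_right]
    exact mul_nonneg hγ.le (hA.1 x y a b ha hb)
  · have h' := h y (γ • v) ⟨v, hv, rfl⟩
    rw [← smul_inv_smul₀ hγ.ne' u, ← smul_sub, real_inner_smul_right] at h'
    exact nonneg_of_mul_nonneg_right (by linarith) hγ

/-- The resolvent of a monotone operator is nonexpansive. -/
theorem IsMonotoneOp.norm_sub_le_of_sub_mem {A : H → Set H} (hA : IsMonotoneOp A)
    {a b p q : H} (hp : a - p ∈ A p) (hq : b - q ∈ A q) : ‖p - q‖ ≤ ‖a - b‖ := by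
  have hmono := hA p q _ _ hp hq
  have : ‖p - q‖ ^ 2 ≤ ‖p - q‖ * ‖a - b‖ := by
    calc ‖p - q‖ ^ 2 = ⟪p - q, a - b⟫ - ⟪p - q, (a - p) - (b - q)⟫ := by
          rw [← real_inner_self_eq_norm_sq, ← inner_sub_right]; congr 1; abel
      _ ≤ ‖p - q‖ * ‖a - b‖ := by linarith [real_inner_le_norm (p - q) (a - b)]
  nlinarith [norm_nonneg (p - q), norm_nonneg (a - b)]

theorem IsMaxMonotoneOp.mem_and_mem_of_inner_add_inner_nonneg {K : Type*} [NormedAddCommGroup K]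
    [InnerProductSpace ℝ K] {A : H → Set H} {B : K → Set K}
    (hA : IsMaxMonotoneOp A) (hB : IsMaxMonotoneOp B) {a pa : H} {b pb : K}
    (h : ∀ a' pa' b' pb', pa' ∈ A a' → pb' ∈ B b' →
      0 ≤ ⟪a - a', pa - pa'⟫ + ⟪b - b', pb - pb'⟫) :
    pa ∈ A a ∧ pb ∈ B b := by
  have hpa : pa ∈ A a := by
    refine hA.2 a pa fun a' pa' hpa' => ?_
    by_contra! hneg
    -- a graph point of `A` with negative pairing forces `pb ∈ B b`, which then contradicts `h`
    have hpb : pb ∈ B b := hB.2 b pb fun b' pb' hpb' => by linarith [h a' pa' b' pb' hpa' hpb']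
    have := h a' pa' b pb hpa' hpb
    simp only [sub_self, inner_zero_left, add_zero] at this
    linarith
  refine ⟨hpa, hB.2 b pb fun b' pb' hpb' => ?_⟩
  simpa using h a pa b' pb' hpa hpb'

theorem IsMaxMonotoneOp.mem_and_mem_and_mem_of_sum_inner_nonneg {A B C : H → Set H}
    (hA : IsMaxMonotoneOp A) (hB : IsMaxMonotoneOp B) (hC : IsMaxMonotoneOp C)
    {a pa b pb c pc : H}
    (h : ∀ a' pa' b' pb' c' pc', pa' ∈ A a' → pb' ∈ B b' → pc' ∈ C c' →
      0 ≤ ⟪a - a', pa - pa'⟫ + ⟪b - b', pb - pb'⟫ + ⟪c - c', pc - pc'⟫) :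
    pa ∈ A a ∧ pb ∈ B b ∧ pc ∈ C c := by
  have hpc : pc ∈ C c := by
    refine hC.2 c pc fun c' pc' hpc' => ?_
    by_contra! hneg
    obtain ⟨hpa, hpb⟩ := hA.mem_and_mem_of_inner_add_inner_nonneg hB
      fun a' pa' b' pb' hpa' hpb' => by linarith [h a' pa' b' pb' c' pc' hpa' hpb' hpc']
    have := h a pa b pb c' pc' hpa hpb hpc'
    simp only [sub_self, inner_zero_left, zero_add] at this
    linarith
  obtain ⟨hpa, hpb⟩ := hA.mem_and_mem_of_inner_add_inner_nonneg hB
    fun a' pa' b' pb' hpa' hpb' => by simpa using h a' pa' b' pb' c pc hpa' hpb' hpc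
  exact ⟨hpa, hpb, hpc⟩

end MonotoneOperator

section WeakConvergence

variable {E : Type*} [NormedAddCommGroup E] [InnerProductSpace ℝ E] {ι : Type*}

def TendstoWeakly (s : ι → E) (l : Filter ι) (p : E) : Prop :=
  ∀ z, Tendsto (fun k => ⟪s k, z⟫) l (𝓝 ⟪p, z⟫)

theorem TendstoWeakly.mono_left {s : ι → E} {l l' : Filter ι} {p : E}
    (h : TendstoWeakly s l p) (hl : l' ≤ l) : TendstoWeakly s l' p := fun z =>
  (h z).mono_left hl

theorem TendstoWeakly.of_tendsto_sub {s t : ι → E} {l : Filter ι} {p : E}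
    (hs : TendstoWeakly s l p) (h : Tendsto (fun k => t k - s k) l (𝓝 0)) :
    TendstoWeakly t l p := fun z => by
  simpa [inner_sub_left] using (hs z).add (h.inner (𝕜 := ℝ) (tendsto_const_nhds (x := z)))

theorem TendstoWeakly.fst {F : Type*} [NormedAddCommGroup F] [InnerProductSpace ℝ F]
    {s : ι → WithLp 2 (E × F)} {l : Filter ι} {p : WithLp 2 (E × F)}
    (h : TendstoWeakly s l p) : TendstoWeakly (fun k => (s k).fst) l p.fst := fun z => by
  simpa using h (WithLp.toLp 2 (z, 0))

theorem TendstoWeakly.snd {F : Type*} [NormedAddCommGroup F] [InnerProductSpace ℝ F]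
    {s : ι → WithLp 2 (E × F)} {l : Filter ι} {p : WithLp 2 (E × F)}
    (h : TendstoWeakly s l p) : TendstoWeakly (fun k => (s k).snd) l p.snd := fun z => by
  simpa using h (WithLp.toLp 2 (0, z))

/-- The weak limit is the Riesz representative of the limit of the functionals `⟪s k, ·⟫`. -/
theorem exists_tendstoWeakly_of_norm_le [CompleteSpace E] (U : Ultrafilter ι) {s : ι → E}
    {M : ℝ} (hM : ∀ k, ‖s k‖ ≤ M) : ∃ p, TendstoWeakly s U p := by
  have hbound : ∀ z k, |⟪s k, z⟫| ≤ M * ‖z‖ := fun z k =>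
    (abs_real_inner_le_norm _ _).trans (mul_le_mul_of_nonneg_right (hM k) (norm_nonneg z))
  have hlim : ∀ z, ∃ L, Tendsto (fun k => ⟪s k, z⟫) U (𝓝 L) := fun z => by
    have hIcc : ↑(U.map fun k => ⟪s k, z⟫) ≤ 𝓟 (Set.Icc (-(M * ‖z‖)) (M * ‖z‖)) :=
      le_principal_iff.2 (mem_map.2 (univ_mem' fun k => abs_le.1 (hbound z k)))
    obtain ⟨L, -, hL⟩ := isCompact_Icc.ultrafilter_le_nhds _ hIcc
    exact ⟨L, hL⟩
  choose L hL using hlim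
  have hadd : ∀ z z', L (z + z') = L z + L z' := fun z z' =>
    tendsto_nhds_unique (by simpa only [inner_add_right] using hL (z + z')) ((hL z).add (hL z'))
  have hsmul : ∀ (c : ℝ) z, L (c • z) = c * L z := fun c z =>
    tendsto_nhds_unique (by simpa only [real_inner_smul_right] using hL (c • z))
      ((hL z).const_mul c)
  let f : E →L[ℝ] ℝ := LinearMap.mkContinuous ⟨⟨L, hadd⟩, hsmul⟩ M fun z =>
    le_of_tendsto (hL z).norm (Eventually.of_forall (hbound z))
  refine ⟨(InnerProductSpace.toDual ℝ E).symm f, fun z => ?_⟩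
  rw [InnerProductSpace.toDual_symm_apply]
  exact hL z

theorem eq_of_tendstoWeakly_of_tendsto_inner {l l₁ l₂ : Filter ι} [l₁.NeBot] [l₂.NeBot]
    (h₁ : l₁ ≤ l) (h₂ : l₂ ≤ l) {s : ι → E} {p q : E}
    (hp : TendstoWeakly s l₁ p) (hq : TendstoWeakly s l₂ q) {c : ℝ}
    (hc : Tendsto (fun k => ⟪s k, q - p⟫) l (𝓝 c)) : p = q := by
  have hpc := tendsto_nhds_unique (hp (q - p)) (hc.mono_left h₁)
  have hqc := tendsto_nhds_unique (hq (q - p)) (hc.mono_left h₂)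
  have : ⟪q - p, q - p⟫ = 0 := by rw [inner_sub_left, hpc, hqc, sub_self]
  exact (sub_eq_zero.1 (inner_self_eq_zero.1 this)).symm

theorem tendstoWeakly_of_forall_ultrafilter [CompleteSpace E] {l : Filter ι} {s : ι → E}
    {M : ℝ} (hM : ∀ k, ‖s k‖ ≤ M) {p : E}
    (h : ∀ U : Ultrafilter ι, (U : Filter ι) ≤ l → ∀ q, TendstoWeakly s U q → q = p) :
    TendstoWeakly s l p := fun z => by
  rw [tendsto_iff_ultrafilter]
  intro U hU
  obtain ⟨q, hq⟩ := exists_tendstoWeakly_of_norm_le U hM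
  exact h U hU q hq ▸ hq z

/-- Opial's lemma. -/
theorem exists_tendstoWeakly_of_antitone_norm_sub [CompleteSpace E] {s : ℕ → E} {F : Set E}
    (hF : F.Nonempty) (hfejer : ∀ p ∈ F, Antitone fun k => ‖s k - p‖)
    (hcluster : ∀ U : Ultrafilter ℕ, (U : Filter ℕ) ≤ atTop → ∀ q, TendstoWeakly s U q → q ∈ F) :
    ∃ p ∈ F, TendstoWeakly s atTop p := by
  obtain ⟨p₀, hp₀⟩ := hF
  have hM : ∀ k, ‖s k‖ ≤ ‖p₀‖ + ‖s 0 - p₀‖ := fun k =>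
    (norm_le_norm_add_norm_sub' (s k) p₀).trans (by gcongr; exact hfejer p₀ hp₀ (Nat.zero_le k))
  have hconv : ∀ p ∈ F, ∃ a, Tendsto (fun k => ‖s k - p‖ ^ 2) atTop (𝓝 a) := fun p hp =>
    ⟨_, (tendsto_atTop_ciInf (hfejer p hp) ⟨0, by rintro _ ⟨k, rfl⟩; positivity⟩).pow 2⟩
  obtain ⟨p, hp⟩ := exists_tendstoWeakly_of_norm_le (Ultrafilter.of atTop) hM
  have hpF := hcluster _ (Ultrafilter.of_le _) p hp
  refine ⟨p, hpF, tendstoWeakly_of_forall_ultrafilter hM fun U hU q hq => ?_⟩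
  obtain ⟨a, ha⟩ := hconv p hpF
  obtain ⟨b, hb⟩ := hconv q (hcluster U hU q hq)
  have hinner : ∀ k, ⟪s k, q - p⟫ = (‖s k - p‖ ^ 2 - ‖s k - q‖ ^ 2 + ‖q‖ ^ 2 - ‖p‖ ^ 2) / 2 :=
    fun k => by rw [inner_sub_right, norm_sub_sq_real, norm_sub_sq_real]; ring
  refine (eq_of_tendstoWeakly_of_tendsto_inner (Ultrafilter.of_le atTop) hU hp hq
    (c := (a - b + ‖q‖ ^ 2 - ‖p‖ ^ 2) / 2) ?_).symm
  simp_rw [hinner]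
  exact (((ha.sub hb).add_const _).sub_const _).div_const 2

end WeakConvergence

section KrasnoselskiiMann

variable {E : Type*} [NormedAddCommGroup E] [InnerProductSpace ℝ E]

theorem norm_sub_smul_sq_le {d r : E} {lam : ℝ} (hlam : 0 ≤ lam) (h : ‖r‖ ^ 2 ≤ 2 * ⟪d, r⟫) :
    ‖d - lam • r‖ ^ 2 ≤ ‖d‖ ^ 2 - lam * (1 - lam) * ‖r‖ ^ 2 := by
  rw [norm_sub_sq_real, real_inner_smul_right, norm_smul, mul_pow, Real.norm_eq_abs, sq_abs]
  nlinarith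

/- The hypothesis `‖r k‖ ^ 2 ≤ 2 * ⟪z k - p, r k⟫` says that the full step `z k - r k` is no
farther from `p` than `z k`; the relaxed steps below then form a Fejér sequence. -/

theorem KrasnoselskiiMann.norm_succ_sub_sq_le {z r : ℕ → E} {lam : ℝ} (hlam : 0 ≤ lam)
    (hz : ∀ k, z (k + 1) = z k - lam • r k) {p : E}
    (hp : ∀ k, ‖r k‖ ^ 2 ≤ 2 * ⟪z k - p, r k⟫) (k : ℕ) :
    ‖z (k + 1) - p‖ ^ 2 ≤ ‖z k - p‖ ^ 2 - lam * (1 - lam) * ‖r k‖ ^ 2 := by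
  rw [hz, sub_right_comm]
  exact norm_sub_smul_sq_le hlam (hp k)

theorem KrasnoselskiiMann.antitone_norm_sub {z r : ℕ → E} {lam : ℝ} (hlam₀ : 0 ≤ lam)
    (hlam₁ : lam ≤ 1) (hz : ∀ k, z (k + 1) = z k - lam • r k) {p : E}
    (hp : ∀ k, ‖r k‖ ^ 2 ≤ 2 * ⟪z k - p, r k⟫) : Antitone fun k => ‖z k - p‖ := by
  refine antitone_nat_of_succ_le fun k => ?_
  have hstep := KrasnoselskiiMann.norm_succ_sub_sq_le hlam₀ hz hp k
  have : 0 ≤ lam * (1 - lam) * ‖r k‖ ^ 2 := by have := sub_nonneg.2 hlam₁; positivity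
  exact (pow_le_pow_iff_left₀ (norm_nonneg _) (norm_nonneg _) two_ne_zero).1 (by linarith)

theorem KrasnoselskiiMann.tendsto_zero {z r : ℕ → E} {lam : ℝ} (hlam₀ : 0 < lam)
    (hlam₁ : lam < 1) (hz : ∀ k, z (k + 1) = z k - lam • r k) {p : E}
    (hp : ∀ k, ‖r k‖ ^ 2 ≤ 2 * ⟪z k - p, r k⟫) : Tendsto r atTop (𝓝 0) := by
  have hc : 0 < lam * (1 - lam) := mul_pos hlam₀ (sub_pos.2 hlam₁)
  set a : ℕ → ℝ := fun k => ‖z k - p‖ ^ 2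
  obtain ⟨L, ha⟩ : ∃ L, Tendsto a atTop (𝓝 L) := ⟨_,
    (tendsto_atTop_ciInf (KrasnoselskiiMann.antitone_norm_sub hlam₀.le hlam₁.le hz hp)
      ⟨0, by rintro _ ⟨k, rfl⟩; positivity⟩).pow 2⟩
  have hdiff : Tendsto (fun k => (a k - a (k + 1)) / (lam * (1 - lam))) atTop (𝓝 0) := by
    simpa using (ha.sub (ha.comp (tendsto_add_atTop_nat 1))).div_const (lam * (1 - lam))
  have hsq : Tendsto (fun k => ‖r k‖ ^ 2) atTop (𝓝 0) := by
    refine squeeze_zero (fun k => by positivity) (fun k => ?_) hdiff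
    rw [le_div_iff₀ hc]
    linarith [KrasnoselskiiMann.norm_succ_sub_sq_le hlam₀.le hz hp k]
  rw [tendsto_zero_iff_norm_tendsto_zero]
  simpa using hsq.sqrt

end KrasnoselskiiMann

section Ryu

variable {H : Type*} [NormedAddCommGroup H] [InnerProductSpace ℝ H] {A B C : H → Set H}

/-- `(x, y)` is a fixed point of the Ryu iteration, `u` the common value of its three resolvent
steps. -/
def IsRyuFixedPoint (A B C : H → Set H) (x y u : H) : Prop :=
  x - u ∈ A u ∧ y ∈ B u ∧ u - x - y ∈ C u

theorem IsRyuFixedPoint.eq_of_isRyuFixedPoint (hA : IsMonotoneOp A) {x y y' u u' : H}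
    (h : IsRyuFixedPoint A B C x y u) (h' : IsRyuFixedPoint A B C x y' u') : u = u' := by
  simpa [sub_eq_zero] using hA.norm_sub_le_of_sub_mem h.1 h'.1

theorem isRyuFixedPoint_smul_of_zero_eq_add (γ : ℝ) {u a b c : H} (ha : a ∈ A u) (hb : b ∈ B u)
    (hc : c ∈ C u) (h : 0 = a + b + c) :
    IsRyuFixedPoint (fun t => γ • A t) (fun t => γ • B t) (fun t => γ • C t)
      (u + γ • a) (γ • b) u := by
  refine ⟨⟨a, ha, by simp⟩, ⟨b, hb, rfl⟩, ⟨c, hc, ?_⟩⟩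
  rw [eq_neg_of_add_eq_zero_right h.symm]
  module

theorem IsRyuFixedPoint.exists_zero_eq_add {γ : ℝ} (hγ : γ ≠ 0) {x y u : H}
    (h : IsRyuFixedPoint (fun t => γ • A t) (fun t => γ • B t) (fun t => γ • C t) x y u) :
    ∃ a ∈ A u, ∃ b ∈ B u, ∃ c ∈ C u, 0 = a + b + c := by
  obtain ⟨⟨a, ha, hxa⟩, ⟨b, hb, hyb⟩, ⟨c, hc, hzc⟩⟩ := h
  refine ⟨a, ha, b, hb, c, hc, smul_right_injective H hγ ?_⟩
  simp only [smul_zero, smul_add, hxa, hyb, hzc]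
  abel

theorem ryu_residual_norm_sq_le (hA : IsMonotoneOp A) (hB : IsMonotoneOp B)
    (hC : IsMonotoneOp C) {x y u v w x' y' u' : H} (hu : x - u ∈ A u) (hv : u + y - v ∈ B v)
    (hw : u - x + v - y - w ∈ C w) (hfix : IsRyuFixedPoint A B C x' y' u') :
    ‖u - w‖ ^ 2 + ‖v - w‖ ^ 2 ≤ 2 * (⟪x - x', u - w⟫ + ⟪y - y', v - w⟫) := by
  have hsum : ⟪u - u', (x - u) - (x' - u')⟫ + ⟪v - u', (u + y - v) - y'⟫
      + ⟪w - u', (u - x + v - y - w) - (u' - x' - y')⟫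
      = ⟪x - x', u - w⟫ + ⟪y - y', v - w⟫ - (‖u - w‖ ^ 2 + ‖v - w‖ ^ 2 + ‖u - v‖ ^ 2) / 2 := by
    simp only [← real_inner_self_eq_norm_sq, inner_sub_left, inner_sub_right, inner_add_right]
    ring_nf
    simp only [real_inner_comm]
    ring
  linarith [hA _ _ _ _ hu hfix.1, hB _ _ _ _ hv (by simpa using hfix.2.1), hC _ _ _ _ hw hfix.2.2,
    sq_nonneg ‖u - v‖]

/-- The Ryu iteration with the step size absorbed into the operators: `A`, `B`, `C` stand for
`γA`, `γB`, `γC`. -/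
structure IsRyuSequence (A B C : H → Set H) (lam : ℝ) (x y u v w : ℕ → H) : Prop where
  sub_mem_A : ∀ k, x k - u k ∈ A (u k)
  sub_mem_B : ∀ k, u k + y k - v k ∈ B (v k)
  sub_mem_C : ∀ k, u k - x k + v k - y k - w k ∈ C (w k)
  x_succ : ∀ k, x (k + 1) = x k + lam • (w k - u k)
  y_succ : ∀ k, y (k + 1) = y k + lam • (w k - v k)

namespace IsRyuSequence

variable {lam : ℝ} {x y u v w : ℕ → H}

theorem state_succ (hs : IsRyuSequence A B C lam x y u v w) (k : ℕ) :
    WithLp.toLp 2 (x (k + 1), y (k + 1))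
      = WithLp.toLp 2 (x k, y k) - lam • WithLp.toLp 2 (u k - w k, v k - w k) := by
  rw [hs.x_succ, hs.y_succ, ← WithLp.toLp_smul, ← WithLp.toLp_sub, Prod.smul_mk, Prod.mk_sub_mk]
  congr 2 <;> module

theorem residual_norm_sq_le (hs : IsRyuSequence A B C lam x y u v w) (hA : IsMonotoneOp A)
    (hB : IsMonotoneOp B) (hC : IsMonotoneOp C) {x' y' u' : H}
    (hfix : IsRyuFixedPoint A B C x' y' u') (k : ℕ) :
    ‖WithLp.toLp 2 (u k - w k, v k - w k)‖ ^ 2 ≤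
      2 * ⟪WithLp.toLp 2 (x k, y k) - WithLp.toLp 2 (x', y'),
        WithLp.toLp 2 (u k - w k, v k - w k)⟫ := by
  simpa [WithLp.prod_norm_sq_eq_of_L2] using
    ryu_residual_norm_sq_le hA hB hC (hs.sub_mem_A k) (hs.sub_mem_B k) (hs.sub_mem_C k) hfix

theorem tendsto_sub_zero (hs : IsRyuSequence A B C lam x y u v w) (hA : IsMonotoneOp A)
    (hB : IsMonotoneOp B) (hC : IsMonotoneOp C) (hlam₀ : 0 < lam) (hlam₁ : lam < 1)
    {x' y' u' : H} (hfix : IsRyuFixedPoint A B C x' y' u') :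
    Tendsto (fun k => u k - w k) atTop (𝓝 0) ∧ Tendsto (fun k => v k - w k) atTop (𝓝 0) := by
  have h := KrasnoselskiiMann.tendsto_zero hlam₀ hlam₁ hs.state_succ
    (hs.residual_norm_sq_le hA hB hC hfix)
  exact ⟨by simpa [Function.comp_def] using ((WithLp.continuous_fst ..).tendsto 0).comp h,
    by simpa [Function.comp_def] using ((WithLp.continuous_snd ..).tendsto 0).comp h⟩

theorem exists_norm_le (hs : IsRyuSequence A B C lam x y u v w) (hA : IsMonotoneOp A)
    (hB : IsMonotoneOp B) (hC : IsMonotoneOp C) (hlam₀ : 0 ≤ lam) (hlam₁ : lam ≤ 1)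
    {x' y' u' : H} (hfix : IsRyuFixedPoint A B C x' y' u') :
    ∃ M, ∀ k, ‖x k‖ ≤ M ∧ ‖y k‖ ≤ M ∧ ‖u k‖ ≤ M := by
  set D := ‖WithLp.toLp 2 (x 0, y 0) - WithLp.toLp 2 (x', y')‖
  have hD : ∀ k, ‖WithLp.toLp 2 (x k, y k) - WithLp.toLp 2 (x', y')‖ ≤ D := fun k =>
    KrasnoselskiiMann.antitone_norm_sub hlam₀ hlam₁ hs.state_succ
      (hs.residual_norm_sq_le hA hB hC hfix) (Nat.zero_le k)
  refine ⟨‖x'‖ + ‖y'‖ + ‖u'‖ + D, fun k => ?_⟩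
  have hx : ‖x k - x'‖ ≤ D := (WithLp.norm_fst_le H _).trans (hD k)
  have hy : ‖y k - y'‖ ≤ D := (WithLp.norm_snd_le H _).trans (hD k)
  have hu : ‖u k - u'‖ ≤ D := (hA.norm_sub_le_of_sub_mem (hs.sub_mem_A k) hfix.1).trans hx
  have := norm_le_norm_add_norm_sub' (x k) x'
  have := norm_le_norm_add_norm_sub' (y k) y'
  have := norm_le_norm_add_norm_sub' (u k) u'
  exact ⟨by linarith [norm_nonneg y', norm_nonneg u'], by linarith [norm_nonneg x', norm_nonneg u'],
    by linarith [norm_nonneg x', norm_nonneg y']⟩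

theorem isRyuFixedPoint_of_tendstoWeakly (hs : IsRyuSequence A B C lam x y u v w)
    (hA : IsMaxMonotoneOp A) (hB : IsMaxMonotoneOp B) (hC : IsMaxMonotoneOp C)
    {M : ℝ} (hM : ∀ k, ‖x k‖ ≤ M ∧ ‖y k‖ ≤ M)
    (hp : Tendsto (fun k => u k - w k) atTop (𝓝 0)) (hq : Tendsto (fun k => v k - w k) atTop (𝓝 0))
    {l : Filter ℕ} [l.NeBot] (hl : l ≤ atTop) {x' y' u' : H}
    (hx : TendstoWeakly x l x') (hy : TendstoWeakly y l y') (hu : TendstoWeakly u l u') :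
    IsRyuFixedPoint A B C x' y' u' := by
  refine hA.mem_and_mem_and_mem_of_sum_inner_nonneg hB hC fun a pa b pb c pc ha hb hc => ?_
  -- The monotonicity gap is affine in `(x, y, u)` up to terms that vanish with the residuals.
  have hgap : ∀ x y u v w : H,
      ⟪u - a, (x - u) - pa⟫ + ⟪v - b, (u + y - v) - pb⟫ + ⟪w - c, (u - x + v - y - w) - pc⟫
        = ⟪x, c - a⟫ + ⟪y, c - b⟫ + ⟪u, a - c - (pa + pb + pc)⟫ + (⟪a, pa⟫ + ⟪b, pb⟫ + ⟪c, pc⟫)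
          + ⟪u - w, x⟫ + ⟪v - w, y⟫ + ⟪u - w, (v - w) - (u - w) + (pb + pc - b)⟫
          + ⟪v - w, (b - c - pb) - (v - w)⟫ := by
    intro x y u v w
    simp only [inner_sub_left, inner_sub_right, inner_add_right]
    ring_nf
    simp only [real_inner_comm]
    ring
  have hval := hgap x' y' u' u' u'
  rw [add_sub_cancel_left, show u' - x' + u' - y' - u' = u' - x' - y' by abel] at hval
  simp only [sub_self, inner_zero_left, add_zero] at hval
  have hbdd : ∀ s t : ℕ → H, (∀ k, ‖s k‖ ≤ M) → Tendsto t atTop (𝓝 0) →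
      Tendsto (fun k => ⟪t k, s k⟫) l (𝓝 0) := fun s t hs ht =>
    (ht.op_zero_isBoundedUnder_le (isBoundedUnder_of ⟨M, hs⟩) _ norm_inner_le_norm).mono_left hl
  have e₃ := hp.inner (𝕜 := ℝ) ((hq.sub hp).add_const (pb + pc - b))
  have e₄ := hq.inner (𝕜 := ℝ) ((tendsto_const_nhds (x := b - c - pb)).sub hq)
  simp only [sub_self, zero_add, sub_zero, inner_zero_left] at e₃ e₄
  have hlim : Tendsto (fun k => ⟪u k - a, (x k - u k) - pa⟫ + ⟪v k - b, (u k + y k - v k) - pb⟫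
      + ⟪w k - c, (u k - x k + v k - y k - w k) - pc⟫) l
      (𝓝 (⟪x', c - a⟫ + ⟪y', c - b⟫ + ⟪u', a - c - (pa + pb + pc)⟫
        + (⟪a, pa⟫ + ⟪b, pb⟫ + ⟪c, pc⟫))) := by
    simp_rw [hgap]
    simpa only [add_zero] using (((((((hx _).add (hy _)).add (hu _)).add_const _).add
      (hbdd x _ (fun k => (hM k).1) hp)).add (hbdd y _ (fun k => (hM k).2) hq)).add
      (e₃.mono_left hl)).add (e₄.mono_left hl)
  rw [hval]
  refine ge_of_tendsto hlim (Eventually.of_forall fun k => ?_)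
  exact add_nonneg (add_nonneg (hA.1 _ _ _ _ (hs.sub_mem_A k) ha)
    (hB.1 _ _ _ _ (hs.sub_mem_B k) hb)) (hC.1 _ _ _ _ (hs.sub_mem_C k) hc)

theorem exists_tendstoWeakly [CompleteSpace H] (hs : IsRyuSequence A B C lam x y u v w)
    (hA : IsMaxMonotoneOp A) (hB : IsMaxMonotoneOp B) (hC : IsMaxMonotoneOp C)
    (hlam₀ : 0 < lam) (hlam₁ : lam < 1) (hfix : ∃ x' y' u', IsRyuFixedPoint A B C x' y' u') :
    ∃ x' y' u', TendstoWeakly x atTop x' ∧ TendstoWeakly y atTop y' ∧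
      TendstoWeakly u atTop u' ∧ TendstoWeakly v atTop u' ∧ TendstoWeakly w atTop u' ∧
      IsRyuFixedPoint A B C x' y' u' := by
  obtain ⟨x₀, y₀, u₀, hfix₀⟩ := hfix
  obtain ⟨hp, hq⟩ := hs.tendsto_sub_zero hA.1 hB.1 hC.1 hlam₀ hlam₁ hfix₀
  obtain ⟨M, hM⟩ := hs.exists_norm_le hA.1 hB.1 hC.1 hlam₀.le hlam₁.le hfix₀
  have hcluster : ∀ U : Ultrafilter ℕ, (U : Filter ℕ) ≤ atTop → ∀ {x' y' u'},
      TendstoWeakly x U x' → TendstoWeakly y U y' → TendstoWeakly u U u' →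
      IsRyuFixedPoint A B C x' y' u' := fun U hU =>
    hs.isRyuFixedPoint_of_tendstoWeakly hA hB hC (fun k => ⟨(hM k).1, (hM k).2.1⟩) hp hq hU
  obtain ⟨ζ, ⟨u', hζ⟩, hz⟩ := exists_tendstoWeakly_of_antitone_norm_sub
    (s := fun k => WithLp.toLp 2 (x k, y k))
    (F := {ζ | ∃ u', IsRyuFixedPoint A B C ζ.fst ζ.snd u'}) ⟨WithLp.toLp 2 (x₀, y₀), u₀, hfix₀⟩
    (fun _ ⟨_, hp⟩ => KrasnoselskiiMann.antitone_norm_sub hlam₀.le hlam₁.le hs.state_succ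
      (hs.residual_norm_sq_le hA.1 hB.1 hC.1 hp))
    fun U hU _ hζ => (exists_tendstoWeakly_of_norm_le U fun k => (hM k).2.2).imp
      fun _ hu' => hcluster U hU hζ.fst hζ.snd hu'
  have hu : TendstoWeakly u atTop u' :=
    tendstoWeakly_of_forall_ultrafilter (fun k => (hM k).2.2) fun U hU _ hu' =>
      (hcluster U hU (hz.fst.mono_left hU) (hz.snd.mono_left hU) hu').eq_of_isRyuFixedPoint
        hA.1 hζ
  exact ⟨ζ.fst, ζ.snd, u', hz.fst, hz.snd, hu, hu.of_tendsto_sub (by simpa using hq.sub hp),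
    hu.of_tendsto_sub (by simpa using hp.neg), hζ⟩

end IsRyuSequence

end Ryu

/-- Ryu splitting, weak convergence: for `λ ∈ (0,1)`, `(x_k, y_k)` converges weakly to a point
`(x, y)` and `(u_k), (v_k), (w_k)` converge weakly to a common point `u` satisfying
`x − u ∈ γA(u)`, `y ∈ γB(u)` and `u − x − y ∈ γC(u)`; in particular `0 ∈ (A+B+C)(u)`. -/
theorem ryu_splitting_weak_convergence {H : Type*} [NormedAddCommGroup H]
    [InnerProductSpace ℝ H] [CompleteSpace H]
    (A B C : H → Set H)
    (hA : IsMaxMonotoneOp A) (hB : IsMaxMonotoneOp B) (hC : IsMaxMonotoneOp C)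
    (hzer : ∃ u₀ : H, (0 : H) ∈ {s : H | ∃ a ∈ A u₀, ∃ b ∈ B u₀, ∃ c ∈ C u₀, s = a + b + c})
    (γ lam : ℝ) (hγ : 0 < γ) (hlam : 0 < lam) (hlam' : lam < 1)
    (x y u v w : ℕ → H)
    (hu : ∀ k : ℕ, x k - u k ∈ γ • A (u k))
    (hv : ∀ k : ℕ, (u k + y k) - v k ∈ γ • B (v k))
    (hw : ∀ k : ℕ, (u k - x k + v k - y k) - w k ∈ γ • C (w k))
    (hx : ∀ k : ℕ, x (k + 1) = x k + lam • (w k - u k))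
    (hy : ∀ k : ℕ, y (k + 1) = y k + lam • (w k - v k)) :
    ∃ xl yl ul : H,
      (∀ z : H, Tendsto (fun k => ⟪x k, z⟫) atTop (𝓝 ⟪xl, z⟫)) ∧
      (∀ z : H, Tendsto (fun k => ⟪y k, z⟫) atTop (𝓝 ⟪yl, z⟫)) ∧
      (∀ z : H, Tendsto (fun k => ⟪u k, z⟫) atTop (𝓝 ⟪ul, z⟫)) ∧
      (∀ z : H, Tendsto (fun k => ⟪v k, z⟫) atTop (𝓝 ⟪ul, z⟫)) ∧
      (∀ z : H, Tendsto (fun k => ⟪w k, z⟫) atTop (𝓝 ⟪ul, z⟫)) ∧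
      xl - ul ∈ γ • A ul ∧ yl ∈ γ • B ul ∧ ul - xl - yl ∈ γ • C ul ∧
      (0 : H) ∈ {s : H | ∃ a ∈ A ul, ∃ b ∈ B ul, ∃ c ∈ C ul, s = a + b + c} := by
  obtain ⟨u₀, a₀, ha₀, b₀, hb₀, c₀, hc₀, h₀⟩ := hzer
  have hs : IsRyuSequence (fun t => γ • A t) (fun t => γ • B t) (fun t => γ • C t) lam
      x y u v w := ⟨hu, hv, hw, hx, hy⟩
  obtain ⟨xl, yl, ul, hxl, hyl, hul, hvl, hwl, hfix⟩ :=
    hs.exists_tendstoWeakly (hA.smul hγ) (hB.smul hγ) (hC.smul hγ) hlam hlam'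
      ⟨_, _, _, isRyuFixedPoint_smul_of_zero_eq_add γ ha₀ hb₀ hc₀ h₀⟩
  exact ⟨xl, yl, ul, hxl, hyl, hul, hvl, hwl, hfix.1, hfix.2.1, hfix.2.2,
    hfix.exists_zero_eq_add hγ.ne'⟩
end

section
/- (Key monotonicity inequality for Ryu splitting.) Let A, B, C be monotone set-valued operators on H and let γ > 0. Suppose x, y, u ∈ H satisfy x − u ∈ γ•A(u), y ∈ γ•B(u) and u − x − y ∈ γ•C(u), and suppose x', y', u', v', w' ∈ H satisfy x' − u' ∈ γ•A(u'), (u' + y') − v' ∈ γ•B(v') and (u' − x' + v' − y') − w' ∈ γ•C(w'). Then 0 ≤ ⟪x − x', w' − u'⟫ − ‖w' − u'‖² + ⟪y − y', w' − v'⟫ − ‖w' − v'‖² + ⟪w' − u', w' − v'⟫. -/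
open scoped RealInnerProductSpace Pointwise

section

variable {H : Type*} [NormedAddCommGroup H] [InnerProductSpace ℝ H]

theorem IsMonotoneOp.inner_nonneg_of_mem_smul {A : H → Set H} (hA : IsMonotoneOp A)
    {γ : ℝ} (hγ : 0 ≤ γ) {x y s t : H} (hs : s ∈ γ • A x) (ht : t ∈ γ • A y) :
    0 ≤ ⟪x - y, s - t⟫ := by
  obtain ⟨a, ha, rfl⟩ := hs
  obtain ⟨b, hb, rfl⟩ := ht
  rw [← smul_sub, real_inner_smul_right]
  exact mul_nonneg hγ (hA x y a b ha hb)

theorem ryu_inner_identity (x y u x' y' u' v' w' : H) :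
    ⟪x - x', w' - u'⟫ - ‖w' - u'‖ ^ 2 + ⟪y - y', w' - v'⟫ - ‖w' - v'‖ ^ 2 +
        ⟪w' - u', w' - v'⟫ =
      ⟪u - u', (x - u) - (x' - u')⟫ + ⟪u - v', y - ((u' + y') - v')⟫ +
        ⟪u - w', (u - x - y) - ((u' - x' + v' - y') - w')⟫ := by
  simp only [← real_inner_self_eq_norm_sq, inner_sub_left, inner_sub_right, inner_add_right,
    real_inner_comm]
  ring

end

theorem ryu_key_inequality_general {H : Type*} [NormedAddCommGroup H]
    [InnerProductSpace ℝ H]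
    (A B C : H → Set H)
    (hA : IsMonotoneOp A) (hB : IsMonotoneOp B) (hC : IsMonotoneOp C)
    (γ : ℝ) (hγ : 0 < γ)
    (x y u : H)
    (hxu : x - u ∈ γ • A u) (hyu : y ∈ γ • B u) (hu : u - x - y ∈ γ • C u)
    (x' y' u' v' w' : H)
    (hx'u' : x' - u' ∈ γ • A u')
    (hv' : (u' + y') - v' ∈ γ • B v')
    (hw' : (u' - x' + v' - y') - w' ∈ γ • C w') :
    0 ≤ ⟪x - x', w' - u'⟫ - ‖w' - u'‖ ^ 2 + ⟪y - y', w' - v'⟫ - ‖w' - v'‖ ^ 2 +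
        ⟪w' - u', w' - v'⟫ := by
  rw [ryu_inner_identity x y u x' y' u' v' w']
  have hAuu' := hA.inner_nonneg_of_mem_smul hγ.le hxu hx'u'
  have hBuv' := hB.inner_nonneg_of_mem_smul hγ.le hyu hv'
  have hCuw' := hC.inner_nonneg_of_mem_smul hγ.le hu hw'
  positivity

/-- Key monotonicity inequality for Ryu splitting. -/
theorem ryu_key_inequality {H : Type*} [NormedAddCommGroup H]
    [InnerProductSpace ℝ H] [CompleteSpace H]
    (A B C : H → Set H)
    (hA : IsMonotoneOp A) (hB : IsMonotoneOp B) (hC : IsMonotoneOp C)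
    (γ : ℝ) (hγ : 0 < γ)
    (x y u : H)
    (hxu : x - u ∈ γ • A u) (hyu : y ∈ γ • B u) (hu : u - x - y ∈ γ • C u)
    (x' y' u' v' w' : H)
    (hx'u' : x' - u' ∈ γ • A u')
    (hv' : (u' + y') - v' ∈ γ • B v')
    (hw' : (u' - x' + v' - y') - w' ∈ γ • C w') :
    0 ≤ ⟪x - x', w' - u'⟫ - ‖w' - u'‖ ^ 2 + ⟪y - y', w' - v'⟫ - ‖w' - v'‖ ^ 2 +
        ⟪w' - u', w' - v'⟫ :=
  ryu_key_inequality_general A B C hA hB hC γ hγ x y u hxu hyu hu x' y' u' v' w' hx'u' hv' hw'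
end
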